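/- arXiv:2405.02988 — 2 statements merged into one kernel-verified Lean document; each statement's English description precedes it below -/
import Mathlib

section
/- Let μ > −1 and k, j ≥ 0 be integers. If j ≥ 1 then (1−zw) ∂/∂z̄ Q^μ_{k,j}(z,w) + j z Q^μ_{k,j}(z,w) = j Q^μ_{k,j−1}(z,w), while for j = 0 the left-hand side vanishes. Moreover, (1−zw) ∂/∂z Q^μ_{k,j}(z,w) − (j+μ+1) w Q^μ_{k,j}(z,w) = −(j+μ+1) Q^μ_{k,j+1}(z,w). These are identities of bivariate polynomials in (z,w). -/
noncomputable def jacobiP (α β : ℝ) (n : ℕ) : Polynomial ℝ :=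
  (n.factorial : ℝ)⁻¹ •
    ∑ k ∈ Finset.range (n + 1),
      ((n.choose k : ℝ) * ((ascPochhammer ℝ (n - k)).eval ((k : ℝ) + α + 1)) *
          ((ascPochhammer ℝ k).eval ((n : ℝ) + α + β + 1))) •
        ((Polynomial.X - 1) * Polynomial.C (2⁻¹ : ℝ)) ^ k

noncomputable def zernikeQ (μ : ℝ) (k j : ℕ) : MvPolynomial (Fin 2) ℂ :=
  if j ≤ k then
    MvPolynomial.C ((((j.factorial : ℝ) / ((ascPochhammer ℝ j).eval (μ + 1)) : ℝ) : ℂ)) *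
      MvPolynomial.X 0 ^ (k - j) *
      Polynomial.aeval (2 * MvPolynomial.X 0 * MvPolynomial.X 1 - 1)
        (jacobiP μ ((k - j : ℕ) : ℝ) j)
  else
    MvPolynomial.C ((((k.factorial : ℝ) / ((ascPochhammer ℝ k).eval (μ + 1)) : ℝ) : ℂ)) *
      MvPolynomial.X 1 ^ (j - k) *
      Polynomial.aeval (2 * MvPolynomial.X 0 * MvPolynomial.X 1 - 1)
        (jacobiP μ ((j - k : ℕ) : ℝ) k)

/-! For `j ≤ k`, expanding `P_j^{(μ,k-j)}(t)` in powers of `(t - 1)/2 = zw - 1` and absorbing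
the factor `j!/(μ+1)_j` gives `Q^μ_{k,j} = z^{k-j} F(zw - 1)`, where `F = zernikeRadial μ k j`
has coefficients `C(j,s) (k+μ+1)_s / (μ+1)_s`; symmetrically `Q^μ_{k,j} = w^{j-k} F(zw - 1)`
with `F = zernikeRadial μ j k` for `k ≤ j`. As `∂/∂z̄` and `∂/∂z` act on `F(zw - 1)` as `z F'`
and `w F'`, and `1 - zw = -(zw - 1)`, each ladder identity reduces to a contiguous relation
raising or lowering the minor index `min(k,j)` or the major index `max(k,j)` of `F`; these are
checked coefficientwise from Pascal's rule and the recurrences of the Pochhammer symbol. -/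

open scoped Polynomial

lemma Nat.cast_choose_mul_sub {R : Type*} [CommRing R] (n k : ℕ) :
    (n.choose k : R) * (n - k) = (k + 1) * n.choose (k + 1) := by
  rcases le_or_gt k n with hk | hk
  · have h : ((n.choose (k + 1) * (k + 1) : ℕ) : R) = ((n.choose k * (n - k) : ℕ) : R) :=
      congrArg _ (Nat.choose_succ_right_eq n k)
    push_cast [Nat.cast_sub hk] at h
    linear_combination -h
  · simp [Nat.choose_eq_zero_of_lt hk, Nat.choose_eq_zero_of_lt (Nat.lt_succ_of_lt hk)]

section Pochhammer

open Polynomial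

lemma ascPochhammer_eval_mul_eval_add {S : Type*} [CommSemiring S] (n m : ℕ) (x : S) :
    (ascPochhammer S n).eval x * (ascPochhammer S m).eval (x + n) =
      (ascPochhammer S (n + m)).eval x := by
  rw [← ascPochhammer_mul, eval_mul, eval_comp]
  simp

lemma ascPochhammer_eval_ne_zero {R : Type*} [CommRing R] [IsDomain R] {x : R}
    (hx : ∀ n : ℕ, x + n ≠ 0) (s : ℕ) : (ascPochhammer R s).eval x ≠ 0 := by
  rw [Ne, ascPochhammer_eval_eq_zero_iff]
  rintro ⟨n, -, hn⟩
  exact hx n (by rw [hn, add_neg_cancel])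

end Pochhammer

lemma Polynomial.coeff_X_mul_derivative {R : Type*} [Semiring R] (p : R[X]) (n : ℕ) :
    (X * derivative p).coeff n = n * p.coeff n := by
  rcases n with _ | n
  · simp
  · rw [coeff_X_mul, coeff_derivative, Nat.cast_comm, Nat.cast_succ]

noncomputable def zernikeRatio (μ : ℝ) (b s : ℕ) : ℝ :=
  (ascPochhammer ℝ s).eval ((b : ℝ) + μ + 1) / (ascPochhammer ℝ s).eval (μ + 1)

open Polynomial in
noncomputable def zernikeRadial (μ : ℝ) (b a : ℕ) : ℝ[X] :=
  ∑ s ∈ Finset.range (a + 1), C ((a.choose s : ℝ) * zernikeRatio μ b s) * X ^ s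

section Radial

open Polynomial

variable {μ : ℝ}

@[simp]
lemma zernikeRatio_zero (b : ℕ) : zernikeRatio μ b 0 = 1 := by
  simp [zernikeRatio]

lemma zernikeRatio_succ_right (hμ : ∀ n : ℕ, μ + 1 + n ≠ 0) (b s : ℕ) :
    zernikeRatio μ b (s + 1) * (μ + 1 + s) = zernikeRatio μ b s * (b + μ + 1 + s) := by
  have hpoch := ascPochhammer_eval_ne_zero hμ s
  rw [zernikeRatio, zernikeRatio, ascPochhammer_succ_eval, ascPochhammer_succ_eval]
  field_simp [hμ s]

lemma zernikeRatio_succ_left (b s : ℕ) :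
    zernikeRatio μ (b + 1) s * (b + μ + 1) = zernikeRatio μ b s * (b + μ + 1 + s) := by
  have h := ascPochhammer_succ_left (S := ℝ) s
  have key := congrArg (eval ((b : ℝ) + μ + 1)) h
  rw [ascPochhammer_succ_eval] at key
  simp only [eval_mul, eval_X, eval_comp, eval_add, eval_one] at key
  rw [zernikeRatio, zernikeRatio, div_mul_eq_mul_div, div_mul_eq_mul_div]
  congr 1
  rw [Nat.cast_succ, show (b : ℝ) + 1 + μ + 1 = b + μ + 1 + 1 by ring]
  linear_combination -key

lemma coeff_zernikeRadial (b a s : ℕ) :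
    (zernikeRadial μ b a).coeff s = a.choose s * zernikeRatio μ b s := by
  simp only [zernikeRadial, finsetSum_coeff, coeff_C_mul_X_pow]
  rw [Finset.sum_eq_single s (fun _ _ h => if_neg (Ne.symm h))]
  · simp
  · intro hs
    simp [Nat.choose_eq_zero_of_lt (by simpa using hs : a < s)]

lemma zernikeRadial_lower_minor (b a : ℕ) :
    C ((a : ℝ) + 1) * zernikeRadial μ b (a + 1) - X * derivative (zernikeRadial μ b (a + 1)) =
      C ((a : ℝ) + 1) * zernikeRadial μ b a := by
  ext s
  simp only [coeff_sub, coeff_C_mul, coeff_X_mul_derivative, coeff_zernikeRadial]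
  rcases s with _ | s
  · simp
  · have hsub := Nat.cast_choose_mul_sub (R := ℝ) a s
    have hpascal : ((a + 1).choose (s + 1) : ℝ) = a.choose s + a.choose (s + 1) := by
      exact_mod_cast Nat.choose_succ_succ a s
    rw [hpascal]
    push_cast
    linear_combination zernikeRatio μ b (s + 1) * hsub

lemma zernikeRadial_raise_major (b a : ℕ) :
    X * derivative (zernikeRadial μ b a) + C ((b : ℝ) + μ + 1) * zernikeRadial μ b a =
      C ((b : ℝ) + μ + 1) * zernikeRadial μ (b + 1) a := by
  ext s
  simp only [coeff_add, coeff_C_mul, coeff_X_mul_derivative, coeff_zernikeRadial]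
  linear_combination -(a.choose s : ℝ) * zernikeRatio_succ_left (μ := μ) b s

variable (hμ : ∀ n : ℕ, μ + 1 + n ≠ 0)
include hμ

lemma zernikeRadial_raise_minor (b a : ℕ) :
    C ((b : ℝ) - a) * (X * zernikeRadial μ b a) +
        (X + 1) *
          (X * derivative (zernikeRadial μ b a) + C ((a : ℝ) + μ + 1) * zernikeRadial μ b a) =
      C ((a : ℝ) + μ + 1) * zernikeRadial μ b (a + 1) := by
  ext s
  simp only [add_mul, one_mul, coeff_add, coeff_C_mul, coeff_X_mul_derivative, coeff_zernikeRadial]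
  rcases s with _ | s
  · simp
  · simp only [coeff_X_mul, coeff_add, coeff_C_mul, coeff_X_mul_derivative, coeff_zernikeRadial]
    have hsub := Nat.cast_choose_mul_sub (R := ℝ) a s
    have hpascal : ((a + 1).choose (s + 1) : ℝ) = a.choose s + a.choose (s + 1) := by
      exact_mod_cast Nat.choose_succ_succ a s
    rw [hpascal]
    push_cast
    linear_combination -(a.choose s : ℝ) * zernikeRatio_succ_right hμ b s -
      zernikeRatio μ b (s + 1) * hsub

lemma zernikeRadial_lower_major (b a : ℕ) :
    (X + 1) * (C ((b : ℝ) + 1) * zernikeRadial μ (b + 1) a -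
          X * derivative (zernikeRadial μ (b + 1) a)) -
        C ((b : ℝ) + 1 - a) * (X * zernikeRadial μ (b + 1) a) =
      C ((b : ℝ) + 1) * zernikeRadial μ b a := by
  ext s
  simp only [add_mul, one_mul, coeff_add, coeff_sub, coeff_C_mul, coeff_X_mul_derivative,
    coeff_zernikeRadial]
  rcases s with _ | s
  · simp
  · simp only [coeff_X_mul, coeff_sub, coeff_C_mul, coeff_X_mul_derivative, coeff_zernikeRadial]
    have hsub := Nat.cast_choose_mul_sub (R := ℝ) a s
    have hright := zernikeRatio_succ_right hμ (b + 1) s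
    have hleft := zernikeRatio_succ_left (μ := μ) b (s + 1)
    have hd : (b : ℝ) + μ + 2 + s ≠ 0 := by
      convert hμ (b + 1 + s) using 1
      push_cast
      ring
    have key : (s + 1) * zernikeRatio μ (b + 1) s + (b - s) * zernikeRatio μ (b + 1) (s + 1) =
        (b + 1) * zernikeRatio μ b (s + 1) := by
      apply mul_left_cancel₀ hd
      push_cast at hright hleft
      linear_combination -((s : ℝ) + 1) * hright + ((b : ℝ) + 1) * hleft
    push_cast
    linear_combination zernikeRatio μ (b + 1) s * hsub + (a.choose (s + 1) : ℝ) * key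

lemma smul_jacobiP (a n : ℕ) :
    ((a.factorial : ℝ) / (ascPochhammer ℝ a).eval (μ + 1)) • jacobiP μ n a =
      (zernikeRadial μ (a + n) a).comp ((X - 1) * C 2⁻¹) := by
  rw [jacobiP, smul_smul, zernikeRadial, sum_comp, Finset.smul_sum]
  refine Finset.sum_congr rfl fun s hs => ?_
  have hsa : s ≤ a := Nat.lt_succ_iff.mp (Finset.mem_range.mp hs)
  rw [smul_smul, C_mul_comp, X_pow_comp, smul_eq_C_mul]
  congr 2
  have hsplit := ascPochhammer_eval_mul_eval_add s (a - s) (μ + 1)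
  rw [Nat.add_sub_cancel' hsa] at hsplit
  have hs0 := ascPochhammer_eval_ne_zero hμ s
  have hrest := ascPochhammer_eval_ne_zero (x := μ + 1 + s) (fun m => by
    convert hμ (s + m) using 1; push_cast; ring) (a - s)
  have hfact : (a.factorial : ℝ) ≠ 0 := by positivity
  rw [zernikeRatio, ← hsplit]
  push_cast
  field_simp
  ring_nf

end Radial

lemma MvPolynomial.pderiv_aeval {R S σ : Type*} [CommSemiring R] [CommSemiring S] [Algebra R S]
    (i : σ) (x : MvPolynomial σ S) (p : R[X]) :
    pderiv i (Polynomial.aeval x p) =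
      Polynomial.aeval x (Polynomial.derivative p) * pderiv i x := by
  rw [← smul_eq_mul]
  exact ((pderiv i).restrictScalars R).map_aeval p x

section Zernike

open MvPolynomial

lemma aeval_sub_one_mul_half :
    Polynomial.aeval (2 * X 0 * X 1 - 1 : MvPolynomial (Fin 2) ℂ)
        ((Polynomial.X - 1) * Polynomial.C (2⁻¹ : ℝ)) = X 0 * X 1 - 1 := by
  simp only [map_mul, map_sub, Polynomial.aeval_X, Polynomial.aeval_C, map_one,
    MvPolynomial.algebraMap_apply, Complex.coe_algebraMap, Complex.ofReal_inv, Complex.ofReal_ofNat]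
  have h2 : (2 : MvPolynomial (Fin 2) ℂ) * MvPolynomial.C 2⁻¹ = 1 := by
    rw [← map_ofNat (MvPolynomial.C (σ := Fin 2) (R := ℂ)) 2, ← map_mul,
      mul_inv_cancel₀ two_ne_zero, map_one]
  linear_combination (X 0 * X 1 - 1 : MvPolynomial (Fin 2) ℂ) * h2

lemma pderiv_zero_X_mul_X_sub_one : pderiv 0 (X 0 * X 1 - 1 : MvPolynomial (Fin 2) ℂ) = X 1 := by
  simp [pderiv_X_of_ne (show (1 : Fin 2) ≠ 0 by decide)]

lemma pderiv_one_X_mul_X_sub_one : pderiv 1 (X 0 * X 1 - 1 : MvPolynomial (Fin 2) ℂ) = X 0 := by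
  simp [pderiv_X_of_ne (show (0 : Fin 2) ≠ 1 by decide)]

lemma zernikeQ_zero_right (μ : ℝ) (k : ℕ) : zernikeQ μ k 0 = X 0 ^ k := by
  simp [zernikeQ, jacobiP]

variable {μ : ℝ} (hμ : ∀ n : ℕ, μ + 1 + n ≠ 0)
include hμ

lemma C_mul_aeval_jacobiP (a n : ℕ) (v : MvPolynomial (Fin 2) ℂ) :
    C ((((a.factorial : ℝ) / (ascPochhammer ℝ a).eval (μ + 1) : ℝ) : ℂ)) * v *
        Polynomial.aeval (2 * X 0 * X 1 - 1) (jacobiP μ n a) =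
      v * Polynomial.aeval (X 0 * X 1 - 1) (zernikeRadial μ (a + n) a) := by
  rw [← aeval_sub_one_mul_half, ← Polynomial.aeval_comp, ← smul_jacobiP hμ, map_smul,
    Algebra.smul_def, MvPolynomial.algebraMap_apply, Complex.coe_algebraMap]
  ring

lemma zernikeQ_eq_X0_pow_mul {k j n : ℕ} (h : j + n = k) :
    zernikeQ μ k j = X 0 ^ n * Polynomial.aeval (X 0 * X 1 - 1) (zernikeRadial μ k j) := by
  subst h
  rw [zernikeQ, if_pos (Nat.le_add_right j n), Nat.add_sub_cancel_left, C_mul_aeval_jacobiP hμ]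

lemma zernikeQ_eq_X1_pow_mul {k j n : ℕ} (h : k + n = j) :
    zernikeQ μ k j = X 1 ^ n * Polynomial.aeval (X 0 * X 1 - 1) (zernikeRadial μ j k) := by
  subst h
  rcases n with _ | n
  · simpa using zernikeQ_eq_X0_pow_mul hμ (n := 0) rfl
  · rw [zernikeQ, if_neg (by omega), Nat.add_sub_cancel_left, C_mul_aeval_jacobiP hμ]

lemma zernikeQ_lower_of_le {k j : ℕ} (hj : 1 ≤ j) (hjk : j ≤ k) :
    (1 - X 0 * X 1) * pderiv 1 (zernikeQ μ k j) + C ((j : ℝ) : ℂ) * X 0 * zernikeQ μ k j =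
      C ((j : ℝ) : ℂ) * zernikeQ μ k (j - 1) := by
  obtain ⟨a, rfl⟩ : ∃ a, j = a + 1 := ⟨j - 1, by omega⟩
  obtain ⟨n, rfl⟩ : ∃ n, k = a + 1 + n := ⟨k - (a + 1), by omega⟩
  have h := congrArg (Polynomial.aeval (X 0 * X 1 - 1 : MvPolynomial (Fin 2) ℂ))
    (zernikeRadial_lower_minor (μ := μ) (a + 1 + n) a)
  simp only [map_sub, map_mul, Polynomial.aeval_C, Polynomial.aeval_X,
    MvPolynomial.algebraMap_apply, Complex.coe_algebraMap] at h
  rw [zernikeQ_eq_X0_pow_mul hμ rfl, Nat.add_sub_cancel,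
    zernikeQ_eq_X0_pow_mul hμ (n := n + 1) (by ring)]
  simp only [pderiv_mul, pderiv_pow, pderiv_aeval, pderiv_one_X_mul_X_sub_one,
    pderiv_X_of_ne (show (0 : Fin 2) ≠ 1 by decide), mul_zero, zero_mul, zero_add]
  push_cast at h ⊢
  linear_combination X 0 ^ (n + 1) * h

lemma zernikeQ_lower_of_lt {k j : ℕ} (hkj : k < j) :
    (1 - X 0 * X 1) * pderiv 1 (zernikeQ μ k j) + C ((j : ℝ) : ℂ) * X 0 * zernikeQ μ k j =
      C ((j : ℝ) : ℂ) * zernikeQ μ k (j - 1) := by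
  obtain ⟨n, rfl⟩ : ∃ n, j = k + n + 1 := ⟨j - k - 1, by omega⟩
  have h := congrArg (Polynomial.aeval (X 0 * X 1 - 1 : MvPolynomial (Fin 2) ℂ))
    (zernikeRadial_lower_major hμ (k + n) k)
  simp only [map_sub, map_mul, map_add, map_one, Polynomial.aeval_C, Polynomial.aeval_X,
    MvPolynomial.algebraMap_apply, Complex.coe_algebraMap] at h
  rw [zernikeQ_eq_X1_pow_mul hμ (n := n + 1) (by ring), Nat.add_sub_cancel,
    zernikeQ_eq_X1_pow_mul hμ rfl]
  simp only [pderiv_mul, pderiv_pow, pderiv_aeval, pderiv_one_X_mul_X_sub_one, pderiv_X_self]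
  push_cast [map_add, map_sub, map_one, map_natCast] at h ⊢
  linear_combination X 1 ^ n * h

lemma zernikeQ_raise_of_lt {k j : ℕ} (hjk : j < k) :
    (1 - X 0 * X 1) * pderiv 0 (zernikeQ μ k j) -
        C (((j : ℝ) + μ + 1 : ℝ) : ℂ) * X 1 * zernikeQ μ k j =
      -(C (((j : ℝ) + μ + 1 : ℝ) : ℂ) * zernikeQ μ k (j + 1)) := by
  obtain ⟨n, rfl⟩ : ∃ n, k = j + n + 1 := ⟨k - j - 1, by omega⟩
  have h := congrArg (Polynomial.aeval (X 0 * X 1 - 1 : MvPolynomial (Fin 2) ℂ))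
    (zernikeRadial_raise_minor hμ (j + n + 1) j)
  simp only [map_sub, map_mul, map_add, map_one, Polynomial.aeval_C, Polynomial.aeval_X,
    MvPolynomial.algebraMap_apply, Complex.coe_algebraMap] at h
  rw [zernikeQ_eq_X0_pow_mul hμ (n := n + 1) (by ring),
    zernikeQ_eq_X0_pow_mul hμ (n := n) (by ring)]
  simp only [pderiv_mul, pderiv_pow, pderiv_aeval, pderiv_zero_X_mul_X_sub_one, pderiv_X_self]
  push_cast [map_add, map_sub, map_one, map_natCast] at h ⊢
  linear_combination -X 0 ^ n * h

lemma zernikeQ_raise_of_le {k j : ℕ} (hkj : k ≤ j) :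
    (1 - X 0 * X 1) * pderiv 0 (zernikeQ μ k j) -
        C (((j : ℝ) + μ + 1 : ℝ) : ℂ) * X 1 * zernikeQ μ k j =
      -(C (((j : ℝ) + μ + 1 : ℝ) : ℂ) * zernikeQ μ k (j + 1)) := by
  obtain ⟨n, rfl⟩ : ∃ n, j = k + n := ⟨j - k, by omega⟩
  have h := congrArg (Polynomial.aeval (X 0 * X 1 - 1 : MvPolynomial (Fin 2) ℂ))
    (zernikeRadial_raise_major (μ := μ) (k + n) k)
  simp only [map_mul, map_add, Polynomial.aeval_C, Polynomial.aeval_X,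
    MvPolynomial.algebraMap_apply, Complex.coe_algebraMap] at h
  rw [zernikeQ_eq_X1_pow_mul hμ rfl, zernikeQ_eq_X1_pow_mul hμ (n := n + 1) (by ring)]
  simp only [pderiv_mul, pderiv_pow, pderiv_aeval, pderiv_zero_X_mul_X_sub_one,
    pderiv_X_of_ne (show (1 : Fin 2) ≠ 0 by decide)]
  push_cast [map_add, map_one, map_natCast] at h ⊢
  linear_combination -X 1 ^ (n + 1) * h

end Zernike

open MvPolynomial in
theorem zernike_ladder_Z6 (μ : ℝ) (hμ : μ > -1) (k j : ℕ) :
    (1 ≤ j →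
      (1 - X 0 * X 1) * pderiv (1 : Fin 2) (zernikeQ μ k j) +
          C (((j : ℝ)) : ℂ) * X 0 * zernikeQ μ k j =
        C (((j : ℝ)) : ℂ) * zernikeQ μ k (j - 1)) ∧
    (j = 0 →
      (1 - X 0 * X 1) * pderiv (1 : Fin 2) (zernikeQ μ k j) +
          C (((j : ℝ)) : ℂ) * X 0 * zernikeQ μ k j = 0) ∧
    ((1 - X 0 * X 1) * pderiv (0 : Fin 2) (zernikeQ μ k j) -
          C ((((j : ℝ) + μ + 1 : ℝ)) : ℂ) * X 1 * zernikeQ μ k j =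
        -(C ((((j : ℝ) + μ + 1 : ℝ)) : ℂ) * zernikeQ μ k (j + 1))) := by
  have hμ' : ∀ n : ℕ, μ + 1 + n ≠ 0 := fun n =>
    ne_of_gt (by linarith [(Nat.cast_nonneg n : (0 : ℝ) ≤ n)])
  refine ⟨fun hj => ?_, fun hj => ?_, ?_⟩
  · rcases le_or_gt j k with hjk | hkj
    · exact zernikeQ_lower_of_le hμ' hj hjk
    · exact zernikeQ_lower_of_lt hμ' hkj
  · subst hj
    simp [zernikeQ_zero_right]
  · rcases lt_or_ge j k with hjk | hkj
    · exact zernikeQ_raise_of_lt hμ' hjk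
    · exact zernikeQ_raise_of_le hμ' hkj
end

section
/- For integers k, j ≥ 1 and μ > −1, w ∂/∂z̄ Q^μ_{k,j}(z,w) − j Q^μ_{k,j}(z,w) = (kj/(μ+1)) Q^{μ+1}_{k−1,j−1}(z,w); and for integers k, j ≥ 0 and μ > 0, (1−zw) w ∂/∂z̄ Q^μ_{k,j}(z,w) + [(k+1)(1−zw) − μ zw] Q^μ_{k,j}(z,w) = −μ Q^{μ−1}_{k+1,j+1}(z,w). These are identities of bivariate polynomials in (z,w). -/
/-!
On a product `z ^ a * w ^ b * f (z * w - 1)` the operator `w ∂/∂w` acts as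
`f ↦ b f + (x + 1) f'` in the variable `x = z * w - 1`, and the substitution `t = 2 z w - 1`
used in `Q` turns the Jacobi variable `(t - 1) / 2` into this `x`. Since `Q^μ_{k,j}` is such a
product with `a = k - j`, `b = j - k` (one of them zero), `m = min k j` and `f` the Jacobi
polynomial `P_m^{(μ, |k - j|)}` written in `x`, both identities reduce to two one-variable ladder
relations,
`(x + 1) G'_{n+1} - (n + 1) G_{n+1} = (n + 1 + β) G^{(α+1)}_n` and
`x (x + 1) G'_n + (n + α + β + 1) x G_n + α G_n = (n + 1) G^{(α-1)}_{n+1}`,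
which are checked coefficientwise on the explicit hypergeometric coefficients, together with
`m! / (μ + 1)_m = m / (μ + 1) * (m - 1)! / (μ + 2)_{m-1}` for the normalising constants.
-/

section Jacobi

open Polynomial

noncomputable def jacobiCoeff (α β : ℝ) (n m : ℕ) : ℝ :=
  (n.factorial : ℝ)⁻¹ * (n.choose m : ℝ) *
    (ascPochhammer ℝ (n - m)).eval ((m : ℝ) + α + 1) *
    (ascPochhammer ℝ m).eval ((n : ℝ) + α + β + 1)

lemma jacobiCoeff_of_lt {α β : ℝ} {n m : ℕ} (h : n < m) : jacobiCoeff α β n m = 0 := by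
  simp [jacobiCoeff, Nat.choose_eq_zero_of_lt h]

lemma jacobiCoeff_self_add (α β : ℝ) (m a : ℕ) :
    jacobiCoeff α β (m + a) m =
      (ascPochhammer ℝ a).eval ((m : ℝ) + α + 1) / a.factorial *
        ((ascPochhammer ℝ m).eval ((m : ℝ) + a + α + β + 1) / m.factorial) := by
  have hfac : ((m + a).choose m : ℝ) * a.factorial * m.factorial = (m + a).factorial := by
    exact_mod_cast add_comm a m ▸ Nat.add_choose_mul_factorial_mul_factorial a m
  have hchoose : ((m + a).choose m : ℝ) ≠ 0 := by
    exact_mod_cast (Nat.choose_pos (Nat.le_add_right m a)).ne'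
  rw [jacobiCoeff, Nat.add_sub_cancel_left, ← hfac]
  push_cast
  field_simp

lemma ascPochhammer_succ_eval_left {S : Type*} [CommSemiring S] (n : ℕ) (x : S) :
    (ascPochhammer S (n + 1)).eval x = x * (ascPochhammer S n).eval (x + 1) := by
  simp [ascPochhammer_succ_left, eval_comp]

lemma jacobiCoeff_ladder_down (α β : ℝ) (n m : ℕ) :
    (m + 1 : ℝ) * jacobiCoeff α β (n + 1) (m + 1)
        + (m - (n + 1) : ℝ) * jacobiCoeff α β (n + 1) m
      = (n + 1 + β) * jacobiCoeff (α + 1) β n m := by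
  rcases le_or_gt m n with h | h
  · obtain ⟨a, rfl⟩ := Nat.exists_eq_add_of_le h
    rw [show m + a + 1 = (m + 1) + a by ring, jacobiCoeff_self_add,
      show m + 1 + a = m + (a + 1) by ring, jacobiCoeff_self_add, jacobiCoeff_self_add,
      ascPochhammer_succ_eval, ascPochhammer_succ_eval_left, Nat.factorial_succ,
      Nat.factorial_succ]
    push_cast
    ring_nf
    field_simp
    ring
  · rw [jacobiCoeff_of_lt (by omega : n + 1 < m + 1), jacobiCoeff_of_lt h]
    rcases (Nat.succ_le_of_lt h).eq_or_lt with rfl | h'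
    · push_cast; ring
    · rw [jacobiCoeff_of_lt h']; ring

lemma jacobiCoeff_ladder_up_zero (α β : ℝ) (n : ℕ) :
    α * jacobiCoeff α β n 0 = (n + 1) * jacobiCoeff (α - 1) β (n + 1) 0 := by
  have h := jacobiCoeff_self_add α β 0 n
  have h' := jacobiCoeff_self_add (α - 1) β 0 (n + 1)
  simp only [zero_add, Nat.cast_zero, ascPochhammer_zero, eval_one, Nat.factorial_zero,
    Nat.cast_one, div_one, mul_one] at h h'
  rw [h, h', ascPochhammer_succ_eval_left, Nat.factorial_succ, sub_add_cancel]
  push_cast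
  field_simp

lemma jacobiCoeff_ladder_up (α β : ℝ) (n m : ℕ) :
    (m + 1 + α) * jacobiCoeff α β n (m + 1) + (m + 1 + n + β + α) * jacobiCoeff α β n m
      = (n + 1) * jacobiCoeff (α - 1) β (n + 1) (m + 1) := by
  rcases lt_trichotomy m n with h | rfl | h
  · obtain ⟨a, rfl⟩ : ∃ a, n = m + 1 + a := ⟨n - m - 1, by omega⟩
    rw [jacobiCoeff_self_add, show m + 1 + a = m + (a + 1) by ring, jacobiCoeff_self_add,
      show m + (a + 1) + 1 = m + 1 + (a + 1) by ring, jacobiCoeff_self_add]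
    simp only [ascPochhammer_succ_eval_left a, ascPochhammer_succ_eval m, Nat.factorial_succ]
    push_cast
    ring_nf
    field_simp
    ring
  · have h := jacobiCoeff_self_add α β m 0
    have h' := jacobiCoeff_self_add (α - 1) β (m + 1) 0
    simp only [add_zero, Nat.cast_zero, ascPochhammer_zero, eval_one, Nat.factorial_zero,
      Nat.cast_one, div_one, one_mul] at h h'
    rw [jacobiCoeff_of_lt (Nat.lt_succ_self m), h, h', ascPochhammer_succ_eval,
      Nat.factorial_succ]
    push_cast
    ring_nf
    field_simp
    ring
  · rw [jacobiCoeff_of_lt (by omega : n < m + 1), jacobiCoeff_of_lt h,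
      jacobiCoeff_of_lt (by omega : n + 1 < m + 1)]
    ring

noncomputable def jacobiShift (α β : ℝ) (n : ℕ) : ℝ[X] :=
  ∑ m ∈ Finset.range (n + 1), C (jacobiCoeff α β n m) * X ^ m

lemma coeff_jacobiShift (α β : ℝ) (n m : ℕ) :
    (jacobiShift α β n).coeff m = jacobiCoeff α β n m := by
  simp only [jacobiShift, finsetSum_coeff, coeff_C_mul_X_pow, Finset.sum_ite_eq,
    Finset.mem_range]
  split_ifs with h
  · rfl
  · exact (jacobiCoeff_of_lt (by omega)).symm

lemma jacobiP_eq_comp (α β : ℝ) (n : ℕ) :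
    jacobiP α β n = (jacobiShift α β n).comp ((X - 1) * C 2⁻¹) := by
  simp only [jacobiP, jacobiShift, sum_comp, mul_comp, C_comp, X_pow_comp, Finset.smul_sum,
    smul_eq_C_mul, jacobiCoeff]
  refine Finset.sum_congr rfl fun m _ => ?_
  simp only [C_mul]
  ring

lemma jacobiShift_ladder_down (α β : ℝ) (n : ℕ) :
    (X + 1) * derivative (jacobiShift α β (n + 1)) - C (n + 1 : ℝ) * jacobiShift α β (n + 1)
      = C (n + 1 + β) * jacobiShift (α + 1) β n := by
  ext (_ | m) <;>
    simp only [coeff_sub, add_mul, one_mul, coeff_add, coeff_X_mul, coeff_X_mul_zero,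
      coeff_derivative, coeff_C_mul, coeff_jacobiShift]
  · have h := jacobiCoeff_ladder_down α β n 0
    push_cast at h ⊢
    linear_combination h
  · have h := jacobiCoeff_ladder_down α β n (m + 1)
    push_cast at h ⊢
    linear_combination h

lemma jacobiShift_ladder_up (α β : ℝ) (n : ℕ) :
    X * (X + 1) * derivative (jacobiShift α β n) + C (n + β + α + 1) * X * jacobiShift α β n
        + C α * jacobiShift α β n
      = C (n + 1 : ℝ) * jacobiShift (α - 1) β (n + 1) := by
  ext (_ | _ | m) <;>
    simp only [mul_add, add_mul, mul_one, mul_assoc, coeff_add, coeff_X_mul, coeff_X_mul_zero,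
      coeff_derivative, coeff_C_mul, coeff_jacobiShift, mul_zero, zero_add]
  · linear_combination jacobiCoeff_ladder_up_zero α β n
  · have h := jacobiCoeff_ladder_up α β n 0
    push_cast at h ⊢
    linear_combination h
  · have h := jacobiCoeff_ladder_up α β n (m + 1)
    push_cast at h ⊢
    linear_combination h

lemma aeval_jacobiP {S : Type*} [CommRing S] [Algebra ℝ S] (x : S) (α β : ℝ) (n : ℕ) :
    aeval (2 * x - 1) (jacobiP α β n) = aeval (x - 1) (jacobiShift α β n) := by
  have h : algebraMap ℝ S 2⁻¹ * 2 = 1 := by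
    rw [← map_ofNat (algebraMap ℝ S) 2, ← map_mul]
    norm_num
  have hx : aeval (2 * x - 1) ((X - 1) * C (2⁻¹ : ℝ)) = x - 1 := by
    simp only [map_mul, map_sub, aeval_X, map_one, aeval_C]
    linear_combination (x - 1) * h
  rw [jacobiP_eq_comp, aeval_comp, hx]

end Jacobi

section Zernike

open MvPolynomial

variable {R A : Type*} [CommRing R] [CommRing A] [Algebra A R]

lemma pderiv_one_aeval_X_mul_X_sub_one (g : Polynomial A) :
    pderiv 1 (Polynomial.aeval (X 0 * X 1 - 1 : MvPolynomial (Fin 2) R) g) =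
      X 0 * Polynomial.aeval (X 0 * X 1 - 1 : MvPolynomial (Fin 2) R)
        (Polynomial.derivative g) := by
  rw [← Polynomial.aeval_map_algebraMap R, Derivation.map_aeval, Polynomial.derivative_map,
    Polynomial.aeval_map_algebraMap, smul_eq_mul, mul_comm]
  simp

lemma X_one_mul_pderiv_one_X_pow_mul_aeval (a b : ℕ) (g : Polynomial A) :
    X 1 * pderiv 1
        (X 0 ^ a * X 1 ^ b * Polynomial.aeval (X 0 * X 1 - 1 : MvPolynomial (Fin 2) R) g) =
      X 0 ^ a * X 1 ^ b * Polynomial.aeval (X 0 * X 1 - 1 : MvPolynomial (Fin 2) R)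
        ((b : Polynomial A) * g + (Polynomial.X + 1) * Polynomial.derivative g) := by
  rw [pderiv_mul, pderiv_mul, pderiv_one_aeval_X_mul_X_sub_one, pderiv_pow, pderiv_pow,
    pderiv_X_self, pderiv_X_of_ne (by decide)]
  rcases b with _ | b <;> simp <;> ring

noncomputable def zernikeNorm (μ : ℝ) (m : ℕ) : ℝ :=
  m.factorial / (ascPochhammer ℝ m).eval (μ + 1)

lemma zernikeNorm_succ (μ : ℝ) (m : ℕ) :
    zernikeNorm μ (m + 1) = (m + 1) / (μ + 1) * zernikeNorm (μ + 1) m := by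
  rw [zernikeNorm, zernikeNorm, Nat.factorial_succ, ascPochhammer_succ_eval_left]
  push_cast
  exact mul_div_mul_comm _ _ _ _

noncomputable def zernikeForm (μ : ℝ) (a b m : ℕ) : MvPolynomial (Fin 2) ℂ :=
  C ((zernikeNorm μ m : ℝ) : ℂ) * (X 0 ^ a * X 1 ^ b *
    Polynomial.aeval (X 0 * X 1 - 1 : MvPolynomial (Fin 2) ℂ) (jacobiShift μ (a + b) m))

lemma zernikeQ_add_add_eq_zernikeForm (μ : ℝ) {a b : ℕ} (m : ℕ) (hab : a = 0 ∨ b = 0) :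
    zernikeQ μ (m + a) (m + b) = zernikeForm μ a b m := by
  rw [zernikeQ, zernikeForm]
  split_ifs with h
  · obtain rfl : b = 0 := by omega
    simp [mul_assoc, aeval_jacobiP, zernikeNorm]
  · obtain rfl : a = 0 := by omega
    simp [mul_assoc, aeval_jacobiP, zernikeNorm]

lemma zernikeForm_ladder_down (μ : ℝ) (a b m : ℕ) :
    X 1 * pderiv 1 (zernikeForm μ a b (m + 1))
        - C ((m + 1 + b : ℝ) : ℂ) * zernikeForm μ a b (m + 1) =
      C (((m + 1) * (m + 1 + a + b) / (μ + 1) : ℝ) : ℂ) * zernikeForm (μ + 1) a b m := by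
  have hG : (b : Polynomial ℝ) * jacobiShift μ (a + b) (m + 1)
        + (Polynomial.X + 1) * Polynomial.derivative (jacobiShift μ (a + b) (m + 1))
        - Polynomial.C (m + 1 + b : ℝ) * jacobiShift μ (a + b) (m + 1) =
      Polynomial.C (m + 1 + a + b : ℝ) * jacobiShift (μ + 1) (a + b) m := by
    have h := jacobiShift_ladder_down μ (a + b) m
    simp only [map_add, map_natCast, map_one] at h ⊢
    linear_combination h
  have hc : zernikeNorm μ (m + 1) * (m + 1 + a + b) =
      (m + 1) * (m + 1 + a + b) / (μ + 1) * zernikeNorm (μ + 1) m := by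
    rw [zernikeNorm_succ]
    ring
  have E := congrArg (Polynomial.aeval (X 0 * X 1 - 1 : MvPolynomial (Fin 2) ℂ)) hG
  have HC := congrArg (fun x : ℝ => (C (x : ℂ) : MvPolynomial (Fin 2) ℂ)) hc
  rw [zernikeForm, zernikeForm, pderiv_C_mul, mul_left_comm,
    X_one_mul_pderiv_one_X_pow_mul_aeval]
  simp only [map_add, map_sub, map_mul, map_natCast, map_one, Polynomial.aeval_X,
    Complex.ofReal_mul, Complex.ofReal_add, Complex.ofReal_natCast, Complex.ofReal_one] at E HC ⊢
  linear_combination (C ((zernikeNorm μ (m + 1) : ℝ) : ℂ) * (X 0 ^ a * X 1 ^ b)) * E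
    + (X 0 ^ a * X 1 ^ b * Polynomial.aeval (X 0 * X 1 - 1 : MvPolynomial (Fin 2) ℂ)
      (jacobiShift (μ + 1) (a + b) m)) * HC

lemma zernikeForm_ladder_up {μ : ℝ} (hμ : μ ≠ 0) (a b m : ℕ) :
    (1 - X 0 * X 1) * (X 1 * pderiv 1 (zernikeForm μ a b m)) +
        (C ((m + a + 1 : ℝ) : ℂ) * (1 - X 0 * X 1) - C (μ : ℂ) * (X 0 * X 1))
          * zernikeForm μ a b m =
      -(C (μ : ℂ) * zernikeForm (μ - 1) a b (m + 1)) := by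
  have hG : -Polynomial.X * ((b : Polynomial ℝ) * jacobiShift μ (a + b) m
        + (Polynomial.X + 1) * Polynomial.derivative (jacobiShift μ (a + b) m))
        + (Polynomial.C (m + a + 1 : ℝ) * -Polynomial.X - Polynomial.C μ * (Polynomial.X + 1))
          * jacobiShift μ (a + b) m =
      -(Polynomial.C (m + 1 : ℝ) * jacobiShift (μ - 1) (a + b) (m + 1)) := by
    have h := jacobiShift_ladder_up μ (a + b) m
    simp only [map_add, map_natCast, map_one] at h ⊢
    linear_combination -h
  have hc : zernikeNorm μ m * (m + 1) = μ * zernikeNorm (μ - 1) (m + 1) := by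
    rw [zernikeNorm_succ, sub_add_cancel]
    field_simp
  have E := congrArg (Polynomial.aeval (X 0 * X 1 - 1 : MvPolynomial (Fin 2) ℂ)) hG
  have HC := congrArg (fun x : ℝ => (C (x : ℂ) : MvPolynomial (Fin 2) ℂ)) hc
  rw [zernikeForm, zernikeForm, pderiv_C_mul, mul_left_comm (X 1),
    X_one_mul_pderiv_one_X_pow_mul_aeval]
  simp only [map_add, map_sub, map_mul, map_neg, map_natCast, map_one, Polynomial.aeval_X,
    Polynomial.aeval_C, MvPolynomial.algebraMap_apply, Complex.coe_algebraMap, Complex.ofReal_mul,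
    Complex.ofReal_add, Complex.ofReal_natCast, Complex.ofReal_one] at E HC ⊢
  linear_combination (C ((zernikeNorm μ m : ℝ) : ℂ) * (X 0 ^ a * X 1 ^ b)) * E
    - (X 0 ^ a * X 1 ^ b * Polynomial.aeval (X 0 * X 1 - 1 : MvPolynomial (Fin 2) ℂ)
      (jacobiShift (μ - 1) (a + b) (m + 1))) * HC

end Zernike

open MvPolynomial in
theorem zernike_ladder_Z8 (μ : ℝ) (k j : ℕ) :
    (μ > -1 → 1 ≤ k → 1 ≤ j →
      X 1 * pderiv (1 : Fin 2) (zernikeQ μ k j) - C (((j : ℝ)) : ℂ) * zernikeQ μ k j =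
        C ((((k : ℝ) * (j : ℝ) / (μ + 1) : ℝ)) : ℂ) * zernikeQ (μ + 1) (k - 1) (j - 1)) ∧
    (μ > 0 →
      (1 - X 0 * X 1) * (X 1 * pderiv (1 : Fin 2) (zernikeQ μ k j)) +
          (C ((((k : ℝ) + 1 : ℝ)) : ℂ) * (1 - X 0 * X 1) -
            C ((μ : ℂ)) * (X 0 * X 1)) * zernikeQ μ k j =
        -(C ((μ : ℂ)) * zernikeQ (μ - 1) (k + 1) (j + 1))) := by
  obtain ⟨m, a, b, rfl, rfl, hab⟩ : ∃ m a b, k = m + a ∧ j = m + b ∧ (a = 0 ∨ b = 0) :=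
    ⟨min k j, k - j, j - k, by omega, by omega, by omega⟩
  refine ⟨fun _ hk hj => ?_, fun hμ => ?_⟩
  · obtain ⟨m, rfl⟩ : ∃ m', m = m' + 1 := ⟨m - 1, by omega⟩
    rw [show m + 1 + a - 1 = m + a by omega, show m + 1 + b - 1 = m + b by omega,
      zernikeQ_add_add_eq_zernikeForm μ (m + 1) hab,
      zernikeQ_add_add_eq_zernikeForm (μ + 1) m hab]
    convert zernikeForm_ladder_down μ a b m using 4
    · push_cast; ring
    · rcases hab with rfl | rfl <;> push_cast <;> ring
  · rw [show m + a + 1 = (m + 1) + a by ring, show m + b + 1 = (m + 1) + b by ring,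
      zernikeQ_add_add_eq_zernikeForm μ m hab,
      zernikeQ_add_add_eq_zernikeForm (μ - 1) (m + 1) hab]
    convert zernikeForm_ladder_up hμ.ne' a b m using 5
    push_cast; ring
end
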